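/- arXiv:1806.08410 — 4 statements merged into one kernel-verified Lean document; each statement's English description precedes it below -/
import Mathlib

section
/- Let l = (l_1, ..., l_n) be a tuple of positive integers, let k ≥ 1, and let A(k, l) be the (k + n) × (k·n) integer matrix whose first k rows consist of k copies of l placed in block-diagonal position (the i-th row has l in columns (i-1)n+1, ..., i·n and zeros elsewhere) and whose last n rows consist of k horizontally concatenated copies of the n × n identity matrix. Then the rank of A(k, l) equals n - 1 + k. -/
/-- The `(k+n) × (k·n)` integer matrix `A(k,l)`: the first `k` rows consist of `k` copies
of `l` in block-diagonal position, the last `n` rows are `k` horizontally concatenated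
copies of the `n × n` identity matrix. Rows indexed by `Fin k ⊕ Fin n`, columns by
`Fin k × Fin n` (the pair `(t, j)` is column `j` of the `t`-th block). -/
def matrixA (k n : ℕ) (l : Fin n → ℕ) : Matrix (Fin k ⊕ Fin n) (Fin k × Fin n) ℤ :=
  fun r c =>
    match r with
    | Sum.inl i => if i = c.1 then (l c.2 : ℤ) else 0
    | Sum.inr j => if j = c.2 then 1 else 0

/-- for a tuple `l` of `n` positive integers and `k ≥ 1`,
the rank of `A(k, l)` equals `n - 1 + k`. -/
theorem stmt_0 (k n : ℕ) (hk : 1 ≤ k) (hn : 1 ≤ n) (l : Fin n → ℕ)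
    (hl : ∀ j, 0 < l j) :
    ((matrixA k n l).map ((↑) : ℤ → ℚ)).rank = n - 1 + k := by
  classical
  set M : Matrix (Fin k ⊕ Fin n) (Fin k × Fin n) ℚ :=
    ((matrixA k n l).map ((↑) : ℤ → ℚ)) with hM
  have hl' : ∀ j, (l j : ℚ) ≠ 0 := fun j => by exact_mod_cast (hl j).ne'
  set w : (Fin k ⊕ Fin n) → ℚ :=
    Sum.elim (fun _ => 1) (fun j => -(l j : ℚ)) with hw
  have t0 : Fin k := ⟨0, hk⟩
  have j0 : Fin n := ⟨0, hn⟩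
  have hw0 : w ≠ 0 := by
    intro h
    have := congrFun h (Sum.inl t0)
    simp [hw] at this
  -- key: mulVec of transpose computes the left null equations
  have hmv : ∀ (x : (Fin k ⊕ Fin n) → ℚ) (t : Fin k) (j : Fin n),
      M.transpose.mulVecLin x (t, j) = (l j : ℚ) * x (Sum.inl t) + x (Sum.inr j) := by
    intro x t j
    simp only [Matrix.mulVecLin_apply, Matrix.mulVec, dotProduct,
      Matrix.transpose_apply, Fintype.sum_sum_type, hM, Matrix.map_apply, matrixA]
    simp [Finset.sum_ite_eq', mul_comm]
  have hker : LinearMap.ker M.transpose.mulVecLin = Submodule.span ℚ {w} := by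
    apply le_antisymm
    · intro x hx
      rw [LinearMap.mem_ker] at hx
      have heq : ∀ (t : Fin k) (j : Fin n),
          (l j : ℚ) * x (Sum.inl t) + x (Sum.inr j) = 0 := by
        intro t j
        have := congrFun hx (t, j)
        rwa [hmv] at this
      have hxt : ∀ t : Fin k, x (Sum.inl t) = x (Sum.inl t0) := by
        intro t
        have h1 := heq t j0
        have h2 := heq t0 j0
        have : (l j0 : ℚ) * x (Sum.inl t) = (l j0 : ℚ) * x (Sum.inl t0) := by
          linarith
        exact mul_left_cancel₀ (hl' j0) this
      rw [Submodule.mem_span_singleton]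
      refine ⟨x (Sum.inl t0), ?_⟩
      funext r
      cases r with
      | inl t => simp [hw, hxt t]
      | inr j =>
        have := heq t0 j
        simp only [hw, Pi.smul_apply, Sum.elim_inr, smul_eq_mul]
        linarith
    · rw [Submodule.span_singleton_le_iff_mem, LinearMap.mem_ker]
      funext c
      obtain ⟨t, j⟩ := c
      rw [hmv]
      simp [hw]
  have hrankT : M.transpose.rank + 1 = k + n := by
    have h := LinearMap.finrank_range_add_finrank_ker M.transpose.mulVecLin
    rw [hker, finrank_span_singleton hw0] at h
    rw [Matrix.rank]
    rw [h]
    simp [Module.finrank_fintype_fun_eq_card]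
  have hrank : M.rank = k + n - 1 := by
    rw [← Matrix.rank_transpose]
    omega
  rw [hrank]
  omega
end

section
/- Let l = (l_1, ..., l_n) be a tuple of positive integers, k ≥ 1, and let A(k, l) be the matrix defined as above. Set 𝔩 = gcd(l_1, ..., l_n). Then the (n - 1 + k)-th determinantal divisor of A(k, l) (the gcd of all (n-1+k) × (n-1+k) minors) divides 𝔩^{k-1}. -/
namespace Finset

variable {α ι : Type*} [CommMonoidWithZero α] [NormalizedGCDMonoid α] [Fintype ι]

theorem dvd_mul_gcd_pow_of_dvd_mul_prod (f : ι → α) {d : α} (m : ℕ) (c : α)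
    (h : ∀ t : Fin m → ι, d ∣ c * ∏ i, f (t i)) : d ∣ c * univ.gcd f ^ m := by
  induction m generalizing c with
  | zero => simpa using h Fin.elim0
  | succ m ih =>
    have hj (j : ι) : d ∣ c * univ.gcd f ^ m * f j := by
      rw [mul_right_comm]
      refine ih (c * f j) fun t => ?_
      simpa [Fin.prod_univ_succ, mul_assoc] using h (Fin.cons j t)
    rw [pow_succ, ← mul_assoc]
    exact (dvd_gcd fun j _ => hj j).trans (gcd_mul_left' univ f _).dvd

theorem dvd_gcd_pow_of_dvd_prod (f : ι → α) {d : α} (m : ℕ)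
    (h : ∀ t : Fin m → ι, d ∣ ∏ i, f (t i)) : d ∣ univ.gcd f ^ m := by
  simpa using dvd_mul_gcd_pow_of_dvd_mul_prod f m 1 (by simpa using h)

end Finset

namespace Matrix

variable {R m n ι : Type*} [CommRing R] [NormalizedGCDMonoid R]
  [Fintype m] [Fintype n] [Fintype ι] [DecidableEq ι]

theorem gcd_minors_dvd_det_submatrix (A : Matrix m n R) {N : ℕ} (hι : Fintype.card ι = N)
    (r : ι ↪ m) (c : ι ↪ n) :
    (Finset.univ.gcd fun p : (Fin N ↪ m) × (Fin N ↪ n) => (A.submatrix p.1 p.2).det) ∣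
      (A.submatrix r c).det := by
  let e := (Fintype.equivFinOfCardEq hι).symm
  have hminor : ((A.submatrix r c).submatrix e e).det = (A.submatrix r c).det :=
    det_submatrix_equiv_self e _
  exact hminor ▸ Finset.gcd_dvd (Finset.mem_univ (e.toEmbedding.trans r, e.toEmbedding.trans c))

end Matrix

namespace matrixA

def rowEmbedding (k n : ℕ) : Fin k ⊕ Fin n ↪ Fin (k + 1) ⊕ Fin n :=
  Function.Embedding.sumMap ⟨Fin.succ, Fin.succ_injective k⟩ (Function.Embedding.refl _)

variable {k n : ℕ}

@[simps]
def columnEmbedding (t : Fin k → Fin n) : Fin k ⊕ Fin n ↪ Fin (k + 1) × Fin n :=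
  ⟨Sum.elim (fun i => (i.succ, t i)) (fun j => (0, j)), by
    rintro (a | a) (b | b) h <;> simp_all [Fin.succ_ne_zero, (Fin.succ_ne_zero _).symm]⟩

theorem det_submatrix (l : Fin n → ℕ) (t : Fin k → Fin n) :
    ((matrixA (k + 1) n l).submatrix (rowEmbedding k n) (columnEmbedding t)).det =
      ∏ i, (l (t i) : ℤ) := by
  have hblocks : (matrixA (k + 1) n l).submatrix (rowEmbedding k n) (columnEmbedding t) =
      Matrix.fromBlocks (Matrix.diagonal fun i => (l (t i) : ℤ)) 0
        (Matrix.of fun j i => if j = t i then 1 else 0) 1 := by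
    ext (i | j) (i' | j') <;>
      simp [matrixA, rowEmbedding, Matrix.diagonal_apply, Matrix.one_apply, eq_comm]
    split_ifs with h <;> simp [h]
  rw [hblocks, Matrix.det_fromBlocks_zero₁₂, Matrix.det_diagonal, Matrix.det_one, mul_one]

end matrixA

theorem stmt_1_general (k n : ℕ) (hk : 1 ≤ k) (hn : 1 ≤ n) (l : Fin n → ℕ) :
    (Finset.univ.gcd fun p :
        (Fin (n - 1 + k) ↪ (Fin k ⊕ Fin n)) × (Fin (n - 1 + k) ↪ Fin k × Fin n) =>
      ((matrixA k n l).submatrix p.1 p.2).det) ∣ (((Finset.univ.gcd l : ℕ) : ℤ)) ^ (k - 1) := by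
  obtain ⟨k, rfl⟩ := Nat.exists_eq_add_of_le' hk
  rw [Nat.add_sub_cancel, ← Nat.cast_pow, Int.dvd_natCast]
  refine Finset.dvd_gcd_pow_of_dvd_prod l k fun t => Int.dvd_natCast.mp ?_
  rw [Nat.cast_prod, ← matrixA.det_submatrix]
  exact Matrix.gcd_minors_dvd_det_submatrix _ (by simp only [Fintype.card_sum, Fintype.card_fin]; omega) _ _

/-- the `(n - 1 + k)`-th determinantal divisor of `A(k, l)` (the gcd of all
its `(n-1+k) × (n-1+k)` minors) divides `𝔩^(k-1)`, where `𝔩 = gcd(l_1, ..., l_n)`. -/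
theorem stmt_1 (k n : ℕ) (hk : 1 ≤ k) (hn : 1 ≤ n) (l : Fin n → ℕ)
    (hl : ∀ j, 0 < l j) :
    (Finset.univ.gcd fun p :
        (Fin (n - 1 + k) ↪ (Fin k ⊕ Fin n)) × (Fin (n - 1 + k) ↪ Fin k × Fin n) =>
      ((matrixA k n l).submatrix p.1 p.2).det) ∣ (((Finset.univ.gcd l : ℕ) : ℤ)) ^ (k - 1) :=
  stmt_1_general k n hk hn l
end

section
/- Let r ≥ 2, and for i = 0, ..., r let l_i ∈ ℤ_{>0}^{n_i} with 𝔩_i := gcd of the entries of l_i. Suppose c := gcd(𝔩_0, 𝔩_1) > 1 and gcd(𝔩_i, 𝔩_j) = 1 whenever j ∉ {0, 1}. Let P_0' be the r' × n' integer matrix built (as in Construction 2.1 of the paper) from the exponent vectors consisting of one copy each of (1/c)l_0 and (1/c)l_1, and c copies of each l_i for i ≥ 2, where r' = 2 + c(r-1) - 1 and n' = n_0 + n_1 + c(n_2 + ... + n_r). Then the torsion subgroup of ℤ^{n'}/im((P_0')^T) is isomorphic to (ℤ/𝔩_2ℤ)^{c-1} × ... × (ℤ/𝔩_rℤ)^{c-1}.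 -/
/-- Construction 2.1: given a distinguished block `b0`, block lengths `ν` and exponent
vectors `m b` (of length `ν b`) for each block `b`, the associated matrix has one row
for each block `b ≠ b0`, and the row of `b` is `(-m b0, 0, ..., 0, m b, 0, ..., 0)`
(with `-m b0` in block `b0` and `m b` in block `b`). -/
def trinMatrix {B : Type*} [DecidableEq B] (b0 : B) (ν : B → ℕ)
    (m : (b : B) → Fin (ν b) → ℤ) :
    Matrix {b : B // b ≠ b0} ((b : B) × Fin (ν b)) ℤ := fun row col =>
  if h0 : col.1 = b0 then -(m b0 (h0 ▸ col.2))
  else if h : col.1 = row.1 then m row.1 (h ▸ col.2) else 0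

/-- Block structure for `P₀'` in Lemma 3.2(i): one copy each of the blocks `0` and `1`
and `c` copies of each of the blocks `2, ..., r`. -/
def blockLen9 (r c : ℕ) (n : ℕ → ℕ) : Fin 2 ⊕ (Fin (r - 1) × Fin c) → ℕ
  | Sum.inl i => n i.1
  | Sum.inr it => n (it.1.1 + 2)

/-- Exponent data for `P₀'` in Lemma 3.2(i): the blocks `0` and `1` carry `(1/c)·l₀`
and `(1/c)·l₁`, and each of the `c` copies of block `i ≥ 2` carries `l_i`. -/
def blockVec9 (r c : ℕ) (n : ℕ → ℕ) (l : ℕ → ℕ → ℕ) :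
    (b : Fin 2 ⊕ (Fin (r - 1) × Fin c)) → Fin (blockLen9 r c n b) → ℤ
  | Sum.inl i, j => ((l i.1 j.1 / c : ℕ) : ℤ)
  | Sum.inr it, j => ((l (it.1.1 + 2) j.1 : ℕ) : ℤ)

/- ---------------- auxiliary lemmas ---------------- -/

private lemma bezout_finset (s : Finset ℕ) (f : ℕ → ℕ) :
    ∃ α : ℕ → ℤ, ∑ j ∈ s, α j * f j = s.gcd f := by
  classical
  induction s using Finset.induction with
  | empty => exact ⟨0, by simp⟩
  | @insert a s hx ih =>
    obtain ⟨α, hα⟩ := ih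
    set G : ℤ := ((s.gcd f : ℕ) : ℤ) with hG
    refine ⟨fun j => if j = a then (f a : ℤ).gcdA G
      else (f a : ℤ).gcdB G * α j, ?_⟩
    rw [Finset.sum_insert hx, Finset.gcd_insert]
    have h2 : ∑ j ∈ s, (if j = a then (f a : ℤ).gcdA G
        else (f a : ℤ).gcdB G * α j) * (f j : ℤ)
        = (f a : ℤ).gcdB G * ∑ j ∈ s, α j * f j := by
      rw [Finset.mul_sum]
      refine Finset.sum_congr rfl fun j hj => ?_
      rw [if_neg (by rintro rfl; exact hx hj), mul_assoc]
    beta_reduce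
    rw [if_pos rfl, h2, hα]
    have hb := Int.gcd_eq_gcd_ab (f a : ℤ) G
    have hg : ((GCDMonoid.gcd (f a) (s.gcd f) : ℕ) : ℤ) = Int.gcd (f a : ℤ) G := by
      rw [hG, Int.gcd_natCast_natCast]
      rfl
    rw [hg, hb]; ring

section helpers
variable {R : Type*} [CommRing R] {V : Type*} [AddCommGroup V] [Module R V]

/-- The saturation of a submodule. -/
private def satur (S : Submodule R V) : Submodule R V where
  carrier := {x | ∃ k : R, k ∈ nonZeroDivisors R ∧ k • x ∈ S}
  add_mem' := by
    rintro x y ⟨k, hk, hkx⟩ ⟨m, hm, hmy⟩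
    refine ⟨k * m, mul_mem hk hm, ?_⟩
    rw [smul_add]
    exact Submodule.add_mem _
      (by rw [mul_comm, mul_smul]; exact Submodule.smul_mem _ _ hkx)
      (by rw [mul_smul]; exact Submodule.smul_mem _ _ hmy)
  zero_mem' := ⟨1, one_mem _, by simp⟩
  smul_mem' := by
    rintro a x ⟨k, hk, hkx⟩
    exact ⟨k, hk, by rw [smul_comm]; exact Submodule.smul_mem _ _ hkx⟩

private lemma mem_satur {S : Submodule R V} {x : V} :
    x ∈ satur S ↔ ∃ k : R, k ∈ nonZeroDivisors R ∧ k • x ∈ S := Iff.rfl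

private lemma le_satur (S : Submodule R V) : S ≤ satur S :=
  fun x hx => ⟨1, one_mem _, by simpa⟩

private lemma satur_torsionfree (S : Submodule R V) (x : V ⧸ satur S) (a : R)
    (ha : a ∈ nonZeroDivisors R) (hax : a • x = 0) : x = 0 := by
  obtain ⟨y, rfl⟩ := Submodule.Quotient.mk_surjective _ x
  rw [← Submodule.Quotient.mk_smul] at hax
  rw [Submodule.Quotient.mk_eq_zero] at hax ⊢
  obtain ⟨k, hk, hky⟩ := hax
  exact ⟨k * a, mul_mem hk ha, by rwa [mul_smul]⟩

/-- transport torsion along a linear equiv -/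
private def torsionEquivOfLinearEquiv {W : Type*} [AddCommGroup W] [Module R W]
    (e : V ≃ₗ[R] W) : Submodule.torsion R V ≃+ Submodule.torsion R W where
  toFun x := ⟨e x.1, by
    obtain ⟨a, ha⟩ := x.2
    have ha' : (a : R) • (x : V) = 0 := ha
    exact ⟨a, show (a : R) • (e x.1) = 0 by rw [← map_smul, ha', map_zero]⟩⟩
  invFun y := ⟨e.symm y.1, by
    obtain ⟨a, ha⟩ := y.2
    have ha' : (a : R) • (y : W) = 0 := ha
    exact ⟨a, show (a : R) • (e.symm y.1) = 0 by rw [← map_smul, ha', map_zero]⟩⟩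
  left_inv x := by ext; simp
  right_inv y := by ext; simp
  map_add' x y := by ext; simp

/-- torsion of (torsion-free) × (torsion) -/
private def torsionProdEquiv {F T : Type*} [AddCommGroup F] [Module R F] [AddCommGroup T]
    [Module R T]
    (hF : ∀ x : F, ∀ a : R, a ∈ nonZeroDivisors R → a • x = 0 → x = 0)
    (N : R) (hN : N ∈ nonZeroDivisors R) (hT : ∀ t : T, N • t = 0) :
    Submodule.torsion R (F × T) ≃+ T where
  toFun x := x.1.2
  invFun t := ⟨(0, t), ⟨⟨N, hN⟩, show N • ((0 : F), t) = 0 from Prod.ext (by simp) (hT t)⟩⟩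
  left_inv x := by
    ext
    · obtain ⟨⟨a, ha⟩, hax⟩ := x.2
      have hax' : (a : R) • (x : F × T) = 0 := hax
      have h1 : (a : R) • (x : F × T).1 = 0 := congrArg Prod.fst hax'
      exact (hF (x : F × T).1 a ha h1).symm
    · rfl
  right_inv t := rfl
  map_add' x y := rfl
end helpers

private lemma fin_sum_split {M : Type*} [AddCommMonoid M] {c : ℕ} (hc : 0 < c)
    (f : Fin c → M) :
    ∑ s : Fin c, f s = f ⟨0, hc⟩ + ∑ t : Fin (c - 1), f ⟨t.1 + 1, by have := t.2; omega⟩ := by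
  obtain ⟨c', rfl⟩ : ∃ c', c = c' + 1 := ⟨c - 1, by omega⟩
  rw [Fin.sum_univ_succ]
  rfl

section trin
variable {B : Type*} [DecidableEq B] (b0 : B) (ν : B → ℕ) (m : (b : B) → Fin (ν b) → ℤ)

private lemma trin_b0 (row : {b : B // b ≠ b0}) (j : Fin (ν b0)) :
    trinMatrix b0 ν m row ⟨b0, j⟩ = -(m b0 j) := by
  simp [trinMatrix]

private lemma trin_self (row : {b : B // b ≠ b0}) (j : Fin (ν row.1)) :
    trinMatrix b0 ν m row ⟨row.1, j⟩ = m row.1 j := by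
  simp [trinMatrix, row.2]

private lemma trin_ne (row : {b : B // b ≠ b0}) (b : B) (hb : b ≠ b0) (hbr : b ≠ row.1)
    (j : Fin (ν b)) : trinMatrix b0 ν m row ⟨b, j⟩ = 0 := by
  simp [trinMatrix, hb, hbr, Ne.symm hbr]

variable [Fintype B]

private lemma trin_mulVec_b0 (y : {b : B // b ≠ b0} → ℤ) (j : Fin (ν b0)) :
    (trinMatrix b0 ν m).transpose.mulVec y ⟨b0, j⟩ = -((∑ row, y row) * m b0 j) := by
  rw [Matrix.mulVec, dotProduct]
  have h : ∀ row : {b : B // b ≠ b0},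
      (trinMatrix b0 ν m).transpose ⟨b0, j⟩ row * y row = -(y row * m b0 j) := fun row => by
    rw [Matrix.transpose_apply, trin_b0]; ring
  rw [Finset.sum_congr rfl fun row _ => h row, Finset.sum_neg_distrib, ← Finset.sum_mul]

private lemma trin_mulVec_ne (y : {b : B // b ≠ b0} → ℤ) (b : B) (hb : b ≠ b0)
    (j : Fin (ν b)) :
    (trinMatrix b0 ν m).transpose.mulVec y ⟨b, j⟩ = y ⟨b, hb⟩ * m b j := by
  rw [Matrix.mulVec, dotProduct]
  rw [Finset.sum_eq_single ⟨b, hb⟩]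
  · rw [Matrix.transpose_apply]
    rw [trin_self b0 ν m ⟨b, hb⟩ j, mul_comm]
  · intro row _ hrow
    rw [Matrix.transpose_apply, trin_ne b0 ν m row b hb
      (fun h => hrow (Subtype.ext h.symm)), zero_mul]
  · intro h; exact absurd (Finset.mem_univ _) h
end trin

private def idx9 (r c : ℕ) : Fin 2 ⊕ (Fin (r - 1) × Fin c) → ℕ
  | Sum.inl i => i.1
  | Sum.inr it => it.1.1 + 2

private def g9 (r c : ℕ) (L : ℕ → ℕ) : Fin 2 ⊕ (Fin (r - 1) × Fin c) → ℕ
  | Sum.inl i => L i.1 / c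
  | Sum.inr it => L (it.1.1 + 2)

set_option maxHeartbeats 1000000 in
/-- Lemma 3.2(i): with `c = gcd(𝔩₀, 𝔩₁) > 1` and `gcd(𝔩ᵢ, 𝔩ⱼ) = 1`
whenever `j ∉ {0, 1}`, the torsion subgroup of `ℤ^{n'}/im((P₀')ᵀ)` is isomorphic to
`(ℤ/𝔩₂ℤ)^{c-1} × ... × (ℤ/𝔩ᵣℤ)^{c-1}`. -/
theorem stmt_9 (r : ℕ) (hr : 2 ≤ r) (n : ℕ → ℕ) (l : ℕ → ℕ → ℕ)
    (hn : ∀ i ≤ r, 0 < n i) (hl : ∀ i ≤ r, ∀ j < n i, 0 < l i j)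
    (L : ℕ → ℕ) (hL : ∀ i, L i = (Finset.range (n i)).gcd (l i))
    (c : ℕ) (hc : c = Nat.gcd (L 0) (L 1)) (hc1 : 1 < c)
    (hcop : ∀ i j, i ≤ r → j ≤ r → i ≠ j → 2 ≤ j → Nat.gcd (L i) (L j) = 1) :
    Nonempty ((Submodule.torsion ℤ
        ((((b : Fin 2 ⊕ (Fin (r - 1) × Fin c)) × Fin (blockLen9 r c n b)) → ℤ) ⧸
          LinearMap.range
            ((trinMatrix (Sum.inl 0) (blockLen9 r c n)
              (blockVec9 r c n l)).transpose.mulVecLin))) ≃+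
      ((i : Fin (r - 1)) → Fin (c - 1) → ZMod (L (i.1 + 2)))) := by
  classical
  -- basic arithmetic facts
  have hc0 : 0 < c := by omega
  have hLpos : ∀ i, i ≤ r → 0 < L i := by
    intro i hi
    rcases Nat.eq_zero_or_pos (L i) with h0 | h
    · exfalso
      have h1 : l i 0 = 0 :=
        (Finset.gcd_eq_zero_iff).1 (by rw [← hL i]; exact h0) 0 (Finset.mem_range.2 (hn i hi))
      exact (hl i hi 0 (hn i hi)).ne' h1
    · exact h
  have hLdvd : ∀ i, i ≤ r → ∀ j, j < n i → L i ∣ l i j := fun i hi j hj => by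
    rw [hL i]; exact Finset.gcd_dvd (Finset.mem_range.2 hj)
  have hcL : ∀ i, i < 2 → c ∣ L i := by
    intro i hi
    interval_cases i
    · rw [hc]; exact Nat.gcd_dvd_left _ _
    · rw [hc]; exact Nat.gcd_dvd_right _ _
  have hcl : ∀ i, i < 2 → ∀ j, j < n i → c ∣ l i j :=
    fun i hi j hj => (hcL i hi).trans (hLdvd i (by omega) j hj)
  -- Bezout coefficients
  obtain ⟨α, hα⟩ : ∃ α : ℕ → ℕ → ℤ,
      ∀ i, (∑ j ∈ Finset.range (n i), α i j * l i j) = (L i : ℤ) := by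
    choose α hα using fun i => bezout_finset (Finset.range (n i)) (l i)
    exact ⟨α, fun i => by rw [hα i, hL i]⟩
  -- positivity of the per-block gcds
  have hgpos : ∀ b : Fin 2 ⊕ (Fin (r - 1) × Fin c), 0 < g9 r c L b := by
    rintro (i | it)
    · exact Nat.div_pos (Nat.le_of_dvd (hLpos i.1 (by omega)) (hcL i.1 i.2)) hc0
    · exact hLpos _ (by have := it.1.2; omega)
  -- the α-functional evaluated on the block vectors gives the block gcds
  have hzm : ∀ b : Fin 2 ⊕ (Fin (r - 1) × Fin c),
      (∑ j : Fin (blockLen9 r c n b), α (idx9 r c b) j.1 * blockVec9 r c n l b j)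
        = (g9 r c L b : ℤ) := by
    rintro (i | ⟨i, t⟩)
    · have hi2 : i.1 < 2 := i.2
      show (∑ j : Fin (n i.1), α i.1 j.1 * ((l i.1 j.1 / c : ℕ) : ℤ)) = ((L i.1 / c : ℕ) : ℤ)
      apply mul_left_cancel₀ (show ((c : ℕ) : ℤ) ≠ 0 from Int.natCast_ne_zero.2 hc0.ne')
      rw [Finset.mul_sum]
      have hterm : ∀ j : Fin (n i.1),
          ((c : ℕ) : ℤ) * (α i.1 j.1 * ((l i.1 j.1 / c : ℕ) : ℤ))
            = α i.1 j.1 * (l i.1 j.1 : ℤ) := by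
        intro j
        rw [show ((l i.1 j.1 : ℕ) : ℤ) = ((c * (l i.1 j.1 / c) : ℕ) : ℤ) by
          rw [Nat.mul_div_cancel' (hcl i.1 hi2 j.1 j.2)]]
        push_cast
        ring
      rw [Finset.sum_congr rfl fun j _ => hterm j]
      rw [Fin.sum_univ_eq_sum_range (fun j => α i.1 j * (l i.1 j : ℤ)) (n i.1), hα i.1]
      rw [show ((L i.1 : ℕ) : ℤ) = ((c * (L i.1 / c) : ℕ) : ℤ) by
        rw [Nat.mul_div_cancel' (hcL i.1 hi2)]]
      push_cast
      ring
    · show (∑ j : Fin (n (i.1 + 2)), α (i.1 + 2) j.1 * ((l (i.1 + 2) j.1 : ℕ) : ℤ))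
        = ((L (i.1 + 2) : ℕ) : ℤ)
      rw [Fin.sum_univ_eq_sum_range (fun j => α (i.1 + 2) j * (l (i.1 + 2) j : ℤ)) (n (i.1 + 2))]
      exact hα (i.1 + 2)
  -- abbreviations
  set Rsub := LinearMap.range ((trinMatrix (Sum.inl 0) (blockLen9 r c n)
      (blockVec9 r c n l)).transpose.mulVecLin) with hRsub
  set z : (((b : Fin 2 ⊕ (Fin (r - 1) × Fin c)) × Fin (blockLen9 r c n b)) → ℤ) →
      (Fin 2 ⊕ (Fin (r - 1) × Fin c)) → ℤ :=
    fun x b => ∑ j : Fin (blockLen9 r c n b), α (idx9 r c b) j.1 * x ⟨b, j⟩ with hzdef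
  set emb : Fin (c - 1) → Fin c := fun t => ⟨t.1 + 1, by have := t.2; omega⟩ with hembdef
  have hzadd : ∀ x y b, z (x + y) b = z x b + z y b := by
    intro x y b
    rw [hzdef]
    simp [mul_add, Finset.sum_add_distrib]
  have hzsmul : ∀ (k : ℤ) x b, z (k • x) b = k * z x b := by
    intro k x b
    rw [hzdef]
    simp only [Pi.smul_apply, smul_eq_mul, Finset.mul_sum]
    exact Finset.sum_congr rfl fun j _ => by ring
  set ψl : (((b : Fin 2 ⊕ (Fin (r - 1) × Fin c)) × Fin (blockLen9 r c n b)) → ℤ) →ₗ[ℤ]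
      ((i : Fin (r - 1)) → Fin (c - 1) → ZMod (L (i.1 + 2))) :=
    { toFun := fun x i t => ((z x (Sum.inr (i, emb t)) : ℤ) : ZMod (L (i.1 + 2)))
      map_add' := by
        intro x y
        funext i t
        beta_reduce
        rw [hzadd]
        push_cast
        rfl
      map_smul' := by
        intro k x
        funext i t
        show ((z (k • x) (Sum.inr (i, emb t)) : ℤ) : ZMod (L (i.1 + 2)))
            = k • ((z x (Sum.inr (i, emb t)) : ℤ) : ZMod (L (i.1 + 2)))
        rw [hzsmul]
        push_cast
        rw [zsmul_eq_mul] } with hψldef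
  set Rsat := satur Rsub with hRsatdef
  set φ := Rsat.mkQ.prod ψl with hφdef
  -- evaluation of z on vectors in the row space
  have hzmv : ∀ (y : {b : Fin 2 ⊕ (Fin (r - 1) × Fin c) // b ≠ Sum.inl 0} → ℤ)
      (b : Fin 2 ⊕ (Fin (r - 1) × Fin c)) (hb : b ≠ Sum.inl 0),
      z ((trinMatrix (Sum.inl 0) (blockLen9 r c n)
        (blockVec9 r c n l)).transpose.mulVec y) b
        = y ⟨b, hb⟩ * (g9 r c L b : ℤ) := by
    intro y b hb
    rw [hzdef]
    beta_reduce
    have : ∀ j : Fin (blockLen9 r c n b),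
        α (idx9 r c b) j.1 * ((trinMatrix (Sum.inl 0) (blockLen9 r c n)
          (blockVec9 r c n l)).transpose.mulVec y) ⟨b, j⟩
        = y ⟨b, hb⟩ * (α (idx9 r c b) j.1 * blockVec9 r c n l b j) := by
      intro j
      rw [trin_mulVec_ne _ _ _ y b hb j]
      ring
    rw [Finset.sum_congr rfl fun j _ => this j, ← Finset.mul_sum, hzm b]
  -- first inclusion: the row space is contained in ker φ
  have hsub1 : Rsub ≤ LinearMap.ker φ := by
    rintro x ⟨y, rfl⟩
    rw [LinearMap.mem_ker]
    have h1 : Rsat.mkQ ((trinMatrix (Sum.inl 0) (blockLen9 r c n)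
        (blockVec9 r c n l)).transpose.mulVecLin y) = 0 := by
      rw [Submodule.mkQ_apply, Submodule.Quotient.mk_eq_zero]
      exact le_satur _ ⟨y, rfl⟩
    have h2 : ψl ((trinMatrix (Sum.inl 0) (blockLen9 r c n)
        (blockVec9 r c n l)).transpose.mulVecLin y) = 0 := by
      rw [hψldef]
      funext i t
      show ((z ((trinMatrix (Sum.inl 0) (blockLen9 r c n)
        (blockVec9 r c n l)).transpose.mulVecLin y) (Sum.inr (i, emb t)) : ℤ)
          : ZMod (L (i.1 + 2))) = 0
      rw [Matrix.mulVecLin_apply, hzmv y _ (Sum.inr_ne_inl)]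
      rw [ZMod.intCast_zmod_eq_zero_iff_dvd]
      have hg9 : ((g9 r c L (Sum.inr (i, emb t)) : ℕ) : ℤ) = ((L (i.1 + 2) : ℕ) : ℤ) := rfl
      rw [hg9]
      exact dvd_mul_left _ _
    rw [hφdef, LinearMap.prod_apply]
    exact Prod.ext h1 h2
  -- coefficients for the global relation
  set prodZ : ℤ := ∏ i : Fin (r - 1), (L (i.1 + 2) : ℤ) with hprodZ
  set CZ : Fin (r - 1) → ℤ :=
    fun i => ((L 1 / c : ℕ) : ℤ) * ∏ j ∈ Finset.univ.erase i, (L (j.1 + 2) : ℤ) with hCZ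
  set Cb : Fin 2 ⊕ (Fin (r - 1) × Fin c) → ℤ := fun b => match b with
    | Sum.inl i => if i.1 = 0 then 0 else prodZ
    | Sum.inr it => CZ it.1 with hCb
  set NZ : ℤ := ((L 1 / c : ℕ) : ℤ) * prodZ with hNZ
  have hqpos : ∀ i : Fin (r - 1), 0 < L (i.1 + 2) := fun i => hLpos _ (by have := i.2; omega)
  have hprodpos : 0 < prodZ := by
    rw [hprodZ]
    exact Finset.prod_pos fun i _ => Int.natCast_pos.2 (hqpos i)
  have hq1pos : (0 : ℤ) < ((L 1 / c : ℕ) : ℤ) := by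
    have := hgpos (Sum.inl 1)
    exact_mod_cast this
  have hNZne : NZ ≠ 0 := by positivity
  have hCg : ∀ (b : Fin 2 ⊕ (Fin (r - 1) × Fin c)) (_ : b ≠ Sum.inl 0),
      Cb b * (g9 r c L b : ℤ) = NZ := by
    rintro (i | it) hb
    · have hi1 : i.1 = 1 := by
        rcases Fin.exists_fin_two.1 ⟨i, rfl⟩ with h | h
        · exact absurd (by rw [h]) hb
        · rw [h]; rfl
      have h1 : Cb (Sum.inl i) = prodZ := by
        simp only [hCb]
        rw [if_neg (by omega)]
      have h2 : (g9 r c L (Sum.inl i) : ℤ) = ((L 1 / c : ℕ) : ℤ) := by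
        show ((L i.1 / c : ℕ) : ℤ) = _
        rw [hi1]
      rw [h1, h2, hNZ, mul_comm]
    · have h1 : Cb (Sum.inr it) = CZ it.1 := rfl
      have h2 : (g9 r c L (Sum.inr it) : ℤ) = (L (it.1.1 + 2) : ℤ) := rfl
      rw [h1, h2, hCZ, hNZ, hprodZ]
      beta_reduce
      rw [mul_assoc, Finset.prod_erase_mul _ _ (Finset.mem_univ it.1)]
  -- coprimality facts
  have hcop0v : ∀ i : Fin (r - 1), Nat.Coprime (L (i.1 + 2)) (L 0 / c) := fun i =>
    Nat.Coprime.coprime_dvd_right (Nat.div_dvd_of_dvd (hcL 0 (by omega)))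
      (Nat.Coprime.symm (hcop 0 (i.1 + 2) (by omega) (by have := i.2; omega) (by omega) (by omega)))
  have hcop1v : ∀ i : Fin (r - 1), Nat.Coprime (L (i.1 + 2)) (L 1 / c) := fun i =>
    Nat.Coprime.coprime_dvd_right (Nat.div_dvd_of_dvd (hcL 1 (by omega)))
      (Nat.Coprime.symm (hcop 1 (i.1 + 2) (by omega) (by have := i.2; omega) (by omega) (by omega)))
  have hcopij : ∀ i j : Fin (r - 1), i ≠ j → Nat.Coprime (L (i.1 + 2)) (L (j.1 + 2)) :=
    fun i j hij => hcop (i.1 + 2) (j.1 + 2) (by have := i.2; omega) (by have := j.2; omega)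
      (fun h => hij (Fin.ext (by omega))) (by omega)
  have hcop01 : Nat.Coprime (L 0 / c) (L 1 / c) := by
    have h := Nat.coprime_div_gcd_div_gcd (m := L 0) (n := L 1) (by rw [← hc]; exact hc0)
    rwa [← hc] at h
  -- second inclusion: ker φ is contained in the row space
  have hsub2 : LinearMap.ker φ ≤ Rsub := by
    intro x hx
    rw [LinearMap.mem_ker, hφdef, LinearMap.prod_apply] at hx
    have hx1 : Rsat.mkQ x = 0 := congrArg Prod.fst hx
    have hx2 : ψl x = 0 := congrArg Prod.snd hx
    have hxsat : x ∈ Rsat := by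
      rwa [Submodule.mkQ_apply, Submodule.Quotient.mk_eq_zero] at hx1
    obtain ⟨k, hk0, hkx⟩ := (mem_satur).1 (hRsatdef ▸ hxsat)
    have hk : k ≠ 0 := mem_nonZeroDivisors_iff_ne_zero.1 hk0
    obtain ⟨y, hy⟩ := hkx
    rw [Matrix.mulVecLin_apply] at hy
    set Y : ℤ := ∑ row : {b : Fin 2 ⊕ (Fin (r - 1) × Fin c) // b ≠ Sum.inl 0}, y row with hY
    have hkz : ∀ (b : Fin 2 ⊕ (Fin (r - 1) × Fin c)) (hb : b ≠ Sum.inl 0),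
        k * z x b = y ⟨b, hb⟩ * (g9 r c L b : ℤ) := by
      intro b hb
      rw [← hzsmul, ← hy, hzmv y b hb]
    have hkz0 : k * z x (Sum.inl 0) = -Y * ((L 0 / c : ℕ) : ℤ) := by
      rw [← hzsmul, ← hy, hzdef]
      beta_reduce
      have hterm : ∀ j : Fin (blockLen9 r c n (Sum.inl 0)),
          α (idx9 r c (Sum.inl 0)) j.1 * ((trinMatrix (Sum.inl 0) (blockLen9 r c n)
            (blockVec9 r c n l)).transpose.mulVec y) ⟨Sum.inl 0, j⟩
          = -Y * (α (idx9 r c (Sum.inl 0)) j.1 * blockVec9 r c n l (Sum.inl 0) j) := by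
        intro j
        rw [trin_mulVec_b0, ← hY]
        ring
      rw [Finset.sum_congr rfl fun j _ => hterm j, ← Finset.mul_sum, hzm (Sum.inl 0)]
      rfl
    have hgx : ∀ (b : Fin 2 ⊕ (Fin (r - 1) × Fin c)) (hb : b ≠ Sum.inl 0)
        (j : Fin (blockLen9 r c n b)),
        (g9 r c L b : ℤ) * x ⟨b, j⟩ = z x b * blockVec9 r c n l b j := by
      intro b hb j
      refine mul_left_cancel₀ hk ?_
      have h2 : k * x ⟨b, j⟩ = y ⟨b, hb⟩ * blockVec9 r c n l b j := by
        have : (k • x) ⟨b, j⟩ = y ⟨b, hb⟩ * blockVec9 r c n l b j := by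
          rw [← hy]; exact trin_mulVec_ne _ _ _ y b hb j
        simpa using this
      calc k * ((g9 r c L b : ℤ) * x ⟨b, j⟩)
          = (g9 r c L b : ℤ) * (k * x ⟨b, j⟩) := by ring
        _ = (g9 r c L b : ℤ) * (y ⟨b, hb⟩ * blockVec9 r c n l b j) := by rw [h2]
        _ = (y ⟨b, hb⟩ * (g9 r c L b : ℤ)) * blockVec9 r c n l b j := by ring
        _ = (k * z x b) * blockVec9 r c n l b j := by rw [hkz b hb]
        _ = k * (z x b * blockVec9 r c n l b j) := by ring
    have hgx0 : ∀ j : Fin (blockLen9 r c n (Sum.inl 0)),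
        ((L 0 / c : ℕ) : ℤ) * x ⟨Sum.inl 0, j⟩
          = z x (Sum.inl 0) * blockVec9 r c n l (Sum.inl 0) j := by
      intro j
      refine mul_left_cancel₀ hk ?_
      have h2 : k * x ⟨Sum.inl 0, j⟩ = -Y * blockVec9 r c n l (Sum.inl 0) j := by
        have : (k • x) ⟨Sum.inl 0, j⟩
            = -((∑ row, y row) * blockVec9 r c n l (Sum.inl 0) j) := by
          rw [← hy]; exact trin_mulVec_b0 _ _ _ y j
        rw [← hY] at this
        have h3 : k * x ⟨Sum.inl 0, j⟩ = -(Y * blockVec9 r c n l (Sum.inl 0) j) := by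
          simpa using this
        rw [h3]; ring
      calc k * (((L 0 / c : ℕ) : ℤ) * x ⟨Sum.inl 0, j⟩)
          = ((L 0 / c : ℕ) : ℤ) * (k * x ⟨Sum.inl 0, j⟩) := by ring
        _ = ((L 0 / c : ℕ) : ℤ) * (-Y * blockVec9 r c n l (Sum.inl 0) j) := by rw [h2]
        _ = (-Y * ((L 0 / c : ℕ) : ℤ)) * blockVec9 r c n l (Sum.inl 0) j := by ring
        _ = (k * z x (Sum.inl 0)) * blockVec9 r c n l (Sum.inl 0) j := by rw [hkz0]
        _ = k * (z x (Sum.inl 0) * blockVec9 r c n l (Sum.inl 0) j) := by ring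
    set S : ℤ := ∑ row : {b : Fin 2 ⊕ (Fin (r - 1) × Fin c) // b ≠ Sum.inl 0},
      Cb row.1 * z x row.1 with hS
    have hE : NZ * z x (Sum.inl 0) + ((L 0 / c : ℕ) : ℤ) * S = 0 := by
      refine mul_left_cancel₀ hk ?_
      rw [mul_zero]
      have e1 : ∀ row : {b : Fin 2 ⊕ (Fin (r - 1) × Fin c) // b ≠ Sum.inl 0},
          k * (Cb row.1 * z x row.1) = NZ * y row := by
        intro row
        calc k * (Cb row.1 * z x row.1) = Cb row.1 * (k * z x row.1) := by ring
          _ = Cb row.1 * (y row * (g9 r c L row.1 : ℤ)) := by rw [hkz row.1 row.2]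
          _ = (Cb row.1 * (g9 r c L row.1 : ℤ)) * y row := by ring
          _ = NZ * y row := by rw [hCg row.1 row.2]
      have e2 : k * (NZ * z x (Sum.inl 0) + ((L 0 / c : ℕ) : ℤ) * S)
          = NZ * (k * z x (Sum.inl 0)) + ((L 0 / c : ℕ) : ℤ)
            * ∑ row : {b : Fin 2 ⊕ (Fin (r - 1) × Fin c) // b ≠ Sum.inl 0},
              k * (Cb row.1 * z x row.1) := by
        rw [hS, ← Finset.mul_sum]
        ring
      rw [e2, hkz0, Finset.sum_congr rfl fun row _ => e1 row, ← Finset.mul_sum, ← hY]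
      ring
    have hSB : S = ∑ b : Fin 2 ⊕ (Fin (r - 1) × Fin c), Cb b * z x b := by
      have h1 : ∑ b ∈ Finset.univ.erase (Sum.inl (0 : Fin 2)), Cb b * z x b = S := by
        rw [hS]
        exact Finset.sum_subtype _ (fun b => by simp) _
      rw [← h1, ← Finset.add_sum_erase _ _ (Finset.mem_univ (Sum.inl (0 : Fin 2)))]
      have h0 : Cb (Sum.inl 0) = 0 := by
        simp only [hCb]
        simp
      rw [h0, zero_mul, zero_add]
    have hψx : ∀ (i : Fin (r - 1)) (t : Fin (c - 1)),
        ((L (i.1 + 2) : ℕ) : ℤ) ∣ z x (Sum.inr (i, emb t)) := by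
      intro i t
      have h := congrFun (congrFun hx2 i) t
      exact (ZMod.intCast_zmod_eq_zero_iff_dvd _ _).1 h
    -- divisibility of S by the various gcds
    have hgS : ∀ d : ℤ, d ∣ NZ → IsCoprime d ((L 0 / c : ℕ) : ℤ) → d ∣ S := by
      intro d hdN hdcop
      have h1 : d ∣ ((L 0 / c : ℕ) : ℤ) * S := by
        have h2 : ((L 0 / c : ℕ) : ℤ) * S = -(NZ * z x (Sum.inl 0)) := by linear_combination hE
        rw [h2]
        exact (hdN.mul_right _).neg_right
      exact hdcop.dvd_of_dvd_mul_left h1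
    have hSsplit : S = (Cb (Sum.inl 0) * z x (Sum.inl 0) + Cb (Sum.inl 1) * z x (Sum.inl 1))
        + ∑ i : Fin (r - 1), (CZ i * ∑ s' : Fin c, z x (Sum.inr (i, s'))) := by
      rw [hSB, Fintype.sum_sum_type, Fin.sum_univ_two]
      congr 1
      rw [Fintype.sum_prod_type]
      refine Finset.sum_congr rfl fun i _ => ?_
      rw [Finset.mul_sum]
    have hCb1 : Cb (Sum.inl 1) = prodZ := by
      simp only [hCb]
      norm_num
    have hCb0 : Cb (Sum.inl 0) = 0 := by
      simp only [hCb]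
      simp
    -- divisibility of z at the inr blocks
    have hdvd_inr : ∀ (i0 : Fin (r - 1)) (s : Fin c),
        ((L (i0.1 + 2) : ℕ) : ℤ) ∣ z x (Sum.inr (i0, s)) := by
      intro i0
      have hne0 : ∀ s : Fin c, s.1 ≠ 0 → ((L (i0.1 + 2) : ℕ) : ℤ) ∣ z x (Sum.inr (i0, s)) := by
        intro s hs
        have hseq : s = emb ⟨s.1 - 1, by have := s.2; omega⟩ := by
          rw [hembdef]
          exact Fin.ext (by simp; omega)
        rw [hseq]
        exact hψx i0 _
      intro s
      by_cases hs : s.1 = 0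
      · have hq0 : ((L (i0.1 + 2) : ℕ) : ℤ) ∣ S := by
          refine hgS _ ?_ (Nat.isCoprime_iff_coprime.2 (hcop0v i0))
          rw [hNZ, hprodZ]
          exact Dvd.dvd.mul_left (Finset.dvd_prod_of_mem _ (Finset.mem_univ i0)) _
        have hd3 : ((L (i0.1 + 2) : ℕ) : ℤ)
            ∣ Cb (Sum.inl 0) * z x (Sum.inl 0) + Cb (Sum.inl 1) * z x (Sum.inl 1) := by
          rw [hCb0, hCb1, zero_mul, zero_add, hprodZ]
          exact Dvd.dvd.mul_right (Finset.dvd_prod_of_mem _ (Finset.mem_univ i0)) _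
        have hd4 : ∀ i ∈ Finset.univ.erase i0,
            ((L (i0.1 + 2) : ℕ) : ℤ) ∣ CZ i * ∑ s' : Fin c, z x (Sum.inr (i, s')) := by
          intro i hi
          have hi0i : i0 ∈ Finset.univ.erase i := by
            rw [Finset.mem_erase]
            exact ⟨fun h => (Finset.mem_erase.1 hi).1 h.symm, Finset.mem_univ _⟩
          refine Dvd.dvd.mul_right ?_ _
          rw [hCZ]
          exact Dvd.dvd.mul_left (Finset.dvd_prod_of_mem _ hi0i) _
        have hsum : ((L (i0.1 + 2) : ℕ) : ℤ)
            ∣ CZ i0 * ∑ s' : Fin c, z x (Sum.inr (i0, s')) := by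
          have heq : CZ i0 * ∑ s' : Fin c, z x (Sum.inr (i0, s'))
              = S - (Cb (Sum.inl 0) * z x (Sum.inl 0) + Cb (Sum.inl 1) * z x (Sum.inl 1))
                - ∑ i ∈ Finset.univ.erase i0, (CZ i * ∑ s' : Fin c, z x (Sum.inr (i, s'))) := by
            rw [hSsplit, ← Finset.add_sum_erase _
              (fun i => CZ i * ∑ s' : Fin c, z x (Sum.inr (i, s'))) (Finset.mem_univ i0)]
            ring
          rw [heq]
          exact dvd_sub (dvd_sub hq0 hd3) (Finset.dvd_sum hd4)
        have hcopCZ : IsCoprime ((L (i0.1 + 2) : ℕ) : ℤ) (CZ i0) := by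
          rw [hCZ]
          beta_reduce
          refine IsCoprime.mul_right (Nat.isCoprime_iff_coprime.2 (hcop1v i0)) ?_
          refine IsCoprime.prod_right fun j hj => ?_
          exact Nat.isCoprime_iff_coprime.2 (hcopij i0 j (fun h => (Finset.mem_erase.1 hj).1 h.symm))
        have hSig : ((L (i0.1 + 2) : ℕ) : ℤ) ∣ ∑ s' : Fin c, z x (Sum.inr (i0, s')) :=
          hcopCZ.dvd_of_dvd_mul_left hsum
        have hz00 : ((L (i0.1 + 2) : ℕ) : ℤ) ∣ z x (Sum.inr (i0, ⟨0, hc0⟩)) := by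
          have hsplit2 := fin_sum_split hc0 (fun s' => z x (Sum.inr (i0, s')))
          have heq2 : z x (Sum.inr (i0, ⟨0, hc0⟩))
              = (∑ s' : Fin c, z x (Sum.inr (i0, s')))
                - ∑ t : Fin (c - 1), z x (Sum.inr (i0, ⟨t.1 + 1, by have := t.2; omega⟩)) := by
            rw [hsplit2]
            ring
          rw [heq2]
          exact dvd_sub hSig (Finset.dvd_sum fun t _ => hne0 _ (Nat.succ_ne_zero _))
        have hseq : s = ⟨0, hc0⟩ := Fin.ext hs
        rw [hseq]
        exact hz00
      · exact hne0 s hs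
    -- divisibility of z at the block (inl 1)
    have hdvd1 : ((L 1 / c : ℕ) : ℤ) ∣ z x (Sum.inl 1) := by
      have hq0 : ((L 1 / c : ℕ) : ℤ) ∣ S := by
        refine hgS _ ?_ (Nat.isCoprime_iff_coprime.2 hcop01.symm)
        rw [hNZ]
        exact dvd_mul_right _ _
      have hd4 : ∀ i ∈ (Finset.univ : Finset (Fin (r - 1))),
          ((L 1 / c : ℕ) : ℤ) ∣ CZ i * ∑ s' : Fin c, z x (Sum.inr (i, s')) := by
        intro i _
        refine Dvd.dvd.mul_right ?_ _
        rw [hCZ]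
        exact dvd_mul_right _ _
      have hsum : ((L 1 / c : ℕ) : ℤ) ∣ prodZ * z x (Sum.inl 1) := by
        have heq : prodZ * z x (Sum.inl 1)
            = S - ∑ i : Fin (r - 1), (CZ i * ∑ s' : Fin c, z x (Sum.inr (i, s'))) := by
          rw [hSsplit, hCb0, hCb1]
          ring
        rw [heq]
        exact dvd_sub hq0 (Finset.dvd_sum hd4)
      have hcopP : IsCoprime ((L 1 / c : ℕ) : ℤ) prodZ := by
        rw [hprodZ]
        refine IsCoprime.prod_right fun j _ => ?_
        exact Nat.isCoprime_iff_coprime.2 (hcop1v j).symm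
      exact hcopP.dvd_of_dvd_mul_left hsum
    -- exact divisibility for all rows
    have hdvdall : ∀ row : {b : Fin 2 ⊕ (Fin (r - 1) × Fin c) // b ≠ Sum.inl 0},
        ((g9 r c L row.1 : ℕ) : ℤ) ∣ z x row.1 := by
      rintro ⟨(i | ⟨i, s⟩), hb⟩
      · have hi1 : i = 1 := by
          rcases Fin.exists_fin_two.1 ⟨i, rfl⟩ with h | h
          · exact absurd (by rw [h]) hb
          · exact h
        subst hi1
        exact hdvd1
      · exact hdvd_inr i s
    set y' : {b : Fin 2 ⊕ (Fin (r - 1) × Fin c) // b ≠ Sum.inl 0} → ℤ :=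
      fun row => z x row.1 / (g9 r c L row.1 : ℤ) with hy'
    have hy'g : ∀ row, (g9 r c L row.1 : ℤ) * y' row = z x row.1 := by
      intro row
      rw [hy']
      exact Int.mul_ediv_cancel' (hdvdall row)
    have hgne : ∀ b, ((g9 r c L b : ℕ) : ℤ) ≠ 0 :=
      fun b => Int.natCast_ne_zero.2 (hgpos b).ne'
    have hz0eq : z x (Sum.inl 0) = -(∑ row, y' row) * ((L 0 / c : ℕ) : ℤ) := by
      refine mul_left_cancel₀ hNZne ?_
      have e3 : ∀ row : {b : Fin 2 ⊕ (Fin (r - 1) × Fin c) // b ≠ Sum.inl 0},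
          Cb row.1 * z x row.1 = NZ * y' row := by
        intro row
        calc Cb row.1 * z x row.1 = Cb row.1 * ((g9 r c L row.1 : ℤ) * y' row) := by
              rw [hy'g row]
          _ = (Cb row.1 * (g9 r c L row.1 : ℤ)) * y' row := by ring
          _ = NZ * y' row := by rw [hCg row.1 row.2]
      calc NZ * z x (Sum.inl 0) = -(((L 0 / c : ℕ) : ℤ) * S) := by linear_combination hE
        _ = -(((L 0 / c : ℕ) : ℤ)
            * ∑ row : {b : Fin 2 ⊕ (Fin (r - 1) × Fin c) // b ≠ Sum.inl 0}, NZ * y' row) := by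
            rw [hS, Finset.sum_congr rfl fun row _ => e3 row]
        _ = NZ * (-(∑ row, y' row) * ((L 0 / c : ℕ) : ℤ)) := by
            rw [← Finset.mul_sum]
            ring
    -- conclusion: x is in the row space
    refine ⟨y', ?_⟩
    rw [Matrix.mulVecLin_apply]
    funext col
    obtain ⟨b, j⟩ := col
    by_cases hb0 : b = Sum.inl 0
    · subst hb0
      rw [trin_mulVec_b0]
      refine mul_left_cancel₀ (hgne (Sum.inl 0)) ?_
      have hgg : ((g9 r c L (Sum.inl 0) : ℕ) : ℤ) = ((L 0 / c : ℕ) : ℤ) := rfl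
      rw [hgg, hgx0 j, hz0eq]
      ring
    · rw [trin_mulVec_ne _ _ _ y' b hb0 j]
      refine mul_left_cancel₀ (hgne b) ?_
      rw [hgx b hb0 j, ← hy'g ⟨b, hb0⟩]
      ring
  -- Bezout functional against the primitive vectors
  have hαp : ∀ i : Fin (r - 1),
      (∑ j : Fin (n (i.1 + 2)), α (i.1 + 2) j.1 * ((l (i.1 + 2) j.1 / L (i.1 + 2) : ℕ) : ℤ))
        = 1 := by
    intro i
    have hLp := hLpos (i.1 + 2) (by have := i.2; omega)
    refine mul_left_cancel₀
      (show ((L (i.1 + 2) : ℕ) : ℤ) ≠ 0 from Int.natCast_ne_zero.2 hLp.ne') ?_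
    rw [Finset.mul_sum, mul_one]
    have hterm : ∀ j : Fin (n (i.1 + 2)),
        ((L (i.1 + 2) : ℕ) : ℤ) * (α (i.1 + 2) j.1 * ((l (i.1 + 2) j.1 / L (i.1 + 2) : ℕ) : ℤ))
          = α (i.1 + 2) j.1 * ((l (i.1 + 2) j.1 : ℕ) : ℤ) := by
      intro j
      rw [show ((l (i.1 + 2) j.1 : ℕ) : ℤ)
          = ((L (i.1 + 2) * (l (i.1 + 2) j.1 / L (i.1 + 2)) : ℕ) : ℤ) by
        rw [Nat.mul_div_cancel' (hLdvd (i.1 + 2) (by have := i.2; omega) j.1 j.2)]]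
      push_cast
      ring
    rw [Finset.sum_congr rfl fun j _ => hterm j]
    rw [Fin.sum_univ_eq_sum_range (fun j => α (i.1 + 2) j * (l (i.1 + 2) j : ℤ)) (n (i.1 + 2))]
    exact hα (i.1 + 2)
  -- surjectivity of φ
  have hsurj : Function.Surjective φ := by
    rintro ⟨qq, tt⟩
    obtain ⟨x0, hx0⟩ := Submodule.Quotient.mk_surjective Rsat qq
    choose w hw using fun (i : Fin (r - 1)) (t : Fin (c - 1)) =>
      ZMod.intCast_surjective (tt i t - ψl x0 i t)
    set coeff : Fin (r - 1) → Fin c → ℤ := fun i s =>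
      if s.1 = 0 then -(∑ t : Fin (c - 1), w i t)
      else w i ⟨s.1 - 1, by have := s.2; omega⟩ with hcoeff
    set v : ((b : Fin 2 ⊕ (Fin (r - 1) × Fin c)) × Fin (blockLen9 r c n b)) → ℤ :=
      fun col => (match col.1 with
        | Sum.inl _ => fun _ => (0 : ℤ)
        | Sum.inr it => fun j : Fin (n (it.1.1 + 2)) =>
            coeff it.1 it.2 * ((l (it.1.1 + 2) j.1 / L (it.1.1 + 2) : ℕ) : ℤ) : Fin (blockLen9 r c n col.1) → ℤ) col.2 with hv
    set yvb : Fin 2 ⊕ (Fin (r - 1) × Fin c) → ℤ := fun b => (match b with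
      | Sum.inl _ => (0 : ℤ)
      | Sum.inr it => (∏ jj ∈ Finset.univ.erase it.1, (L (jj.1 + 2) : ℤ)) * coeff it.1 it.2) with hyvb
    set yv : {b : Fin 2 ⊕ (Fin (r - 1) × Fin c) // b ≠ Sum.inl 0} → ℤ :=
      fun row => yvb row.1 with hyv
    have hcoeffsum : ∀ i : Fin (r - 1), ∑ s : Fin c, coeff i s = 0 := by
      intro i
      rw [fin_sum_split hc0 (coeff i)]
      have h1 : coeff i ⟨0, hc0⟩ = -(∑ t : Fin (c - 1), w i t) := by
        simp [hcoeff]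
      have h2 : ∀ t : Fin (c - 1),
          coeff i (⟨t.1 + 1, by have := t.2; omega⟩ : Fin c) = w i t := by
        intro t
        simp [hcoeff]
      rw [h1, Finset.sum_congr rfl fun t _ => h2 t]
      ring
    have hzv : ∀ (i : Fin (r - 1)) (s : Fin c),
        z v (Sum.inr (i, s)) = coeff i s := by
      intro i s
      rw [hzdef]
      beta_reduce
      have hterm : ∀ j : Fin (blockLen9 r c n (Sum.inr (i, s))),
          α (idx9 r c (Sum.inr (i, s))) j.1 * v ⟨Sum.inr (i, s), j⟩
            = coeff i s * (α (i.1 + 2) j.1 * ((l (i.1 + 2) j.1 / L (i.1 + 2) : ℕ) : ℤ)) := by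
        intro j
        have hvv : v ⟨Sum.inr (i, s), j⟩
            = coeff i s * ((l (i.1 + 2) j.1 / L (i.1 + 2) : ℕ) : ℤ) := rfl
        rw [show (idx9 r c (Sum.inr (i, s))) = i.1 + 2 from rfl, hvv]
        ring
      rw [Finset.sum_congr rfl fun j _ => hterm j, ← Finset.mul_sum]
      rw [show (∑ j : Fin (blockLen9 r c n (Sum.inr (i, s))),
        α (i.1 + 2) j.1 * ((l (i.1 + 2) j.1 / L (i.1 + 2) : ℕ) : ℤ)) = 1 from hαp i, mul_one]
    have hyvsum : (∑ row : {b : Fin 2 ⊕ (Fin (r - 1) × Fin c) // b ≠ Sum.inl 0}, yv row) = 0 := by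
      have h1 : ∑ b ∈ Finset.univ.erase (Sum.inl (0 : Fin 2)), yvb b
          = ∑ row : {b : Fin 2 ⊕ (Fin (r - 1) × Fin c) // b ≠ Sum.inl 0}, yv row :=
        Finset.sum_subtype _ (fun b => by simp) _
      have h3 := Finset.add_sum_erase Finset.univ yvb (Finset.mem_univ (Sum.inl (0 : Fin 2)))
      rw [show yvb (Sum.inl 0) = 0 from rfl, zero_add] at h3
      have h2 : ∑ b : Fin 2 ⊕ (Fin (r - 1) × Fin c), yvb b = 0 := by
        rw [Fintype.sum_sum_type, Fintype.sum_prod_type]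
        have hbb : ∀ i : Fin (r - 1), (∑ s : Fin c, yvb (Sum.inr (i, s))) = 0 := by
          intro i
          have he : ∀ s : Fin c, yvb (Sum.inr (i, s))
              = (∏ jj ∈ Finset.univ.erase i, (L (jj.1 + 2) : ℤ)) * coeff i s := fun s => rfl
          rw [Finset.sum_congr rfl fun s _ => he s, ← Finset.mul_sum, hcoeffsum i, mul_zero]
        rw [Finset.sum_congr rfl fun i _ => hbb i]
        have haa : ∀ i : Fin 2, yvb (Sum.inl i) = 0 := fun i => rfl
        rw [Finset.sum_congr rfl fun i _ => haa i]
        simp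
      rw [← h1, h3, h2]
    have hvmem : v ∈ Rsat := by
      rw [hRsatdef]
      refine ⟨prodZ, mem_nonZeroDivisors_of_ne_zero hprodpos.ne', ⟨yv, ?_⟩⟩
      rw [Matrix.mulVecLin_apply]
      funext col
      obtain ⟨b, j⟩ := col
      by_cases hb0 : b = Sum.inl 0
      · subst hb0
        rw [trin_mulVec_b0, hyvsum]
        simp only [Pi.smul_apply, smul_eq_mul]
        rw [show v ⟨Sum.inl 0, j⟩ = 0 from rfl, mul_zero, zero_mul, neg_zero]
      · rw [trin_mulVec_ne _ _ _ yv b hb0 j]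
        simp only [Pi.smul_apply, smul_eq_mul]
        rcases b with i | ⟨i, s⟩
        · rw [show yv ⟨Sum.inl i, hb0⟩ = 0 from rfl, zero_mul]
          rw [show v ⟨Sum.inl i, j⟩ = 0 from rfl, mul_zero]
        · rw [show v ⟨Sum.inr (i, s), j⟩
            = coeff i s * ((l (i.1 + 2) j.1 / L (i.1 + 2) : ℕ) : ℤ) from rfl]
          rw [show yv ⟨Sum.inr (i, s), hb0⟩
            = (∏ jj ∈ Finset.univ.erase i, (L (jj.1 + 2) : ℤ)) * coeff i s from rfl]
          rw [show blockVec9 r c n l (Sum.inr (i, s)) j = ((l (i.1 + 2) j.1 : ℕ) : ℤ) from rfl]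
          rw [show ((l (i.1 + 2) j.1 : ℕ) : ℤ)
              = ((L (i.1 + 2) : ℕ) : ℤ) * ((l (i.1 + 2) j.1 / L (i.1 + 2) : ℕ) : ℤ) by
            rw [← Nat.cast_mul, Nat.mul_div_cancel'
              (hLdvd (i.1 + 2) (by have := i.2; omega) j.1 j.2)]]
          rw [hprodZ, ← Finset.prod_erase_mul _ _ (Finset.mem_univ i)]
          ring
    refine ⟨x0 + v, ?_⟩
    rw [hφdef, LinearMap.prod_apply]
    have hA : Rsat.mkQ (x0 + v) = qq := by
      rw [map_add, Submodule.mkQ_apply, Submodule.mkQ_apply, hx0]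
      rw [show (Submodule.Quotient.mk v : _ ⧸ Rsat) = 0 from
        (Submodule.Quotient.mk_eq_zero _).2 hvmem, add_zero]
    have hB : ψl (x0 + v) = tt := by
      rw [map_add]
      funext i t
      have h1 : ψl v i t = ((w i t : ℤ) : ZMod (L (i.1 + 2))) := by
        show ((z v (Sum.inr (i, emb t)) : ℤ) : ZMod (L (i.1 + 2))) = _
        rw [hzv i (emb t)]
        have hce : coeff i (emb t) = w i t := by simp [hcoeff, hembdef]
        rw [hce]
      have h2 : (ψl x0 + ψl v) i t = ψl x0 i t + ψl v i t := rfl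
      rw [h2, h1, hw i t]
      ring
    exact Prod.ext hA hB
  -- assembly
  have hker : Rsub = LinearMap.ker φ := le_antisymm hsub1 hsub2
  refine ⟨(torsionEquivOfLinearEquiv ((Submodule.quotEquivOfEq Rsub (LinearMap.ker φ)
    hker).trans (φ.quotKerEquivOfSurjective hsurj))).trans
    (torsionProdEquiv ?_ prodZ ?_ ?_)⟩
  · intro xx a ha hax
    exact satur_torsionfree Rsub xx a ha hax
  · exact mem_nonZeroDivisors_of_ne_zero hprodpos.ne'
  · intro tt
    funext i s
    have hcast : ((prodZ : ℤ) : ZMod (L (i.1 + 2))) = 0 := by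
      refine (ZMod.intCast_zmod_eq_zero_iff_dvd _ _).2 ?_
      rw [hprodZ]
      exact Finset.dvd_prod_of_mem _ (Finset.mem_univ i)
    calc (prodZ • tt) i s = prodZ • tt i s := rfl
      _ = ((prodZ : ℤ) : ZMod (L (i.1 + 2))) * tt i s := zsmul_eq_mul _ _
      _ = 0 := by rw [hcast, zero_mul]
end

section
/- Let l_0, ..., l_r be exponent tuples with 𝔩_i the gcd of the entries of l_i, and suppose gcd(𝔩_0, 𝔩_1) = gcd(𝔩_1, 𝔩_2) = gcd(𝔩_0, 𝔩_2) = 2 and gcd(𝔩_i, 𝔩_j) = 1 whenever j ∉ {0,1,2}. Let P_0' be the matrix built as in Construction 2.1 from 2 copies each of (1/2)l_0, (1/2)l_1, (1/2)l_2 and 4 copies of each l_i for i ≥ 3. Then the torsion subgroup of the cokernel ℤ^{n'}/im((P_0')^T) is isomorphic to ℤ/(𝔩_0/2)ℤ × ℤ/(𝔩_1/2)ℤ × ℤ/(𝔩_2/2)ℤ × (ℤ/𝔩_3ℤ)³ × ... × (ℤ/𝔩_rℤ)³. -/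
/-- Block structure for `P₀'` in Lemma 3.2(ii): two copies of each of the blocks
`0, 1, 2` and four copies of each of the blocks `3, ..., r`. -/
def blockLen10 (r : ℕ) (n : ℕ → ℕ) : (Fin 3 × Fin 2) ⊕ (Fin (r - 2) × Fin 4) → ℕ
  | Sum.inl it => n it.1.1
  | Sum.inr it => n (it.1.1 + 3)

/-- Exponent data for `P₀'` in Lemma 3.2(ii): the two copies of block `i ∈ {0, 1, 2}`
carry `(1/2)·l_i`, and each of the four copies of block `i ≥ 3` carries `l_i`. -/
def blockVec10 (r : ℕ) (n : ℕ → ℕ) (l : ℕ → ℕ → ℕ) :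
    (b : (Fin 3 × Fin 2) ⊕ (Fin (r - 2) × Fin 4)) → Fin (blockLen10 r n b) → ℤ
  | Sum.inl it, j => ((l it.1.1 j.1 / 2 : ℕ) : ℤ)
  | Sum.inr it, j => ((l (it.1.1 + 3) j.1 : ℕ) : ℤ)

open Submodule Finset

section LeftInverse

variable {R X M : Type*} [CommRing R] [AddCommGroup X] [Module R X]
  [AddCommGroup M] [Module R M]

lemma LinearMap.map_mem_torsion {Y : Type*} [AddCommGroup Y] [Module R Y] (f : X →ₗ[R] Y)
    {x : X} (hx : x ∈ torsion R X) : f x ∈ torsion R Y := by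
  obtain ⟨a, ha⟩ := (mem_torsion_iff x).mp hx
  exact (mem_torsion_iff _).mpr ⟨a, by rw [← map_smul_of_tower, ha, map_zero]⟩

variable [IsDomain R] [Module.IsTorsionFree R M] {U : X →ₗ[R] M} {ρ : M →ₗ[R] X}

lemma apply_leftInverse_eq_of_smul_mem_map (hρU : ρ ∘ₗ U = LinearMap.id) {N : Submodule R X}
    {x : M} {a : R} (ha : a ≠ 0) (hx : a • x ∈ N.map U) : U (ρ x) = x := by
  obtain ⟨y, -, hy⟩ := hx
  have hρ : ∀ z, ρ (U z) = z := fun z => LinearMap.congr_fun hρU z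
  refine smul_right_injective M ha ?_
  simp only [← map_smul, ← hy, hρ]

noncomputable def torsionQuotMapEquiv (hρU : ρ ∘ₗ U = LinearMap.id) (N : Submodule R X) :
    torsion R (M ⧸ N.map U) ≃ₗ[R] torsion R (X ⧸ N) := by
  have hρ : ∀ z, ρ (U z) = z := fun z => LinearMap.congr_fun hρU z
  have hρN : N.map U ≤ N.comap ρ := by
    rintro _ ⟨y, hy, rfl⟩
    simpa [hρ] using hy
  let φ := (N.map U).mapQ N ρ hρN
  let ψ := N.mapQ (N.map U) U (le_comap_map U N)
  refine LinearEquiv.ofLinearMap (φ.restrict fun _ => φ.map_mem_torsion)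
    (ψ.restrict fun _ => ψ.map_mem_torsion) ?_ ?_
  · ext ⟨x, hx⟩
    obtain ⟨y, rfl⟩ := Submodule.Quotient.mk_surjective _ x
    simp [φ, ψ, hρ]
  · ext ⟨x, hx⟩
    obtain ⟨y, rfl⟩ := Submodule.Quotient.mk_surjective _ x
    obtain ⟨⟨a, ha⟩, hay⟩ := (mem_torsion_iff _).mp hx
    rw [Submonoid.mk_smul, ← Quotient.mk_smul, Quotient.mk_eq_zero] at hay
    simp [φ, ψ, apply_leftInverse_eq_of_smul_mem_map hρU (nonZeroDivisors.ne_zero ha) hay]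

end LeftInverse

lemma Finset.natCast_gcd {ι : Type*} (s : Finset ι) (f : ι → ℕ) :
    ((s.gcd f : ℕ) : ℤ) = s.gcd fun i => (f i : ℤ) := by
  classical
  induction s using Finset.induction with
  | empty => simp
  | insert a s ha ih =>
    rw [gcd_insert, gcd_insert, ← ih, ← Int.coe_gcd, Int.gcd_natCast_natCast]
    rfl

lemma exists_sum_mul_div_gcd_eq_one {N : ℕ} {f : ℕ → ℕ} {j₀ : ℕ} (hj₀ : j₀ < N)
    (hf : f j₀ ≠ 0) :
    ∃ β : Fin N → ℤ, ∑ j : Fin N, β j * ((f j / (range N).gcd f : ℕ) : ℤ) = 1 := by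
  obtain ⟨β, hβ⟩ := (range N).gcd_eq_sum_mul fun j => ((f j / (range N).gcd f : ℕ) : ℤ)
  rw [← natCast_gcd, gcd_div_eq_one (mem_range.mpr hj₀) hf, ← Fin.sum_univ_eq_sum_range] at hβ
  exact ⟨fun j => β j, by simp_rw [mul_comm (β _)]; exact_mod_cast hβ.symm⟩

def sumZero (B : Type*) [Fintype B] : Submodule ℤ (B → ℤ) :=
  LinearMap.ker (∑ b, LinearMap.proj b)

lemma mem_sumZero {B : Type*} [Fintype B] {w : B → ℤ} : w ∈ sumZero B ↔ ∑ b, w b = 0 := by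
  simp [sumZero]

section BlockMatrix

variable {B : Type*} {ν : B → ℕ}

def blockScale (u : (b : B) → Fin (ν b) → ℤ) : (B → ℤ) →ₗ[ℤ] ((b : B) × Fin (ν b) → ℤ) :=
  LinearMap.mulLeft ℤ (fun p : (b : B) × Fin (ν b) => u p.1 p.2) ∘ₗ
    LinearMap.funLeft ℤ ℤ Sigma.fst

@[simp]
lemma blockScale_apply (u : (b : B) → Fin (ν b) → ℤ) (w : B → ℤ) (p : (b : B) × Fin (ν b)) :
    blockScale u w p = u p.1 p.2 * w p.1 := rfl

lemma blockScale_mul (d : B → ℤ) (u : (b : B) → Fin (ν b) → ℤ) :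
    blockScale (fun b j => d b * u b j) = blockScale u ∘ₗ LinearMap.mulLeft ℤ d := by
  ext w p
  simp only [LinearMap.comp_apply, blockScale_apply, LinearMap.mulLeft_apply, Pi.mul_apply]
  ring

lemma exists_leftInverse_blockScale {u : (b : B) → Fin (ν b) → ℤ}
    (hu : ∀ b, ∃ β : Fin (ν b) → ℤ, ∑ j, β j * u b j = 1) :
    ∃ ρ : ((b : B) × Fin (ν b) → ℤ) →ₗ[ℤ] (B → ℤ), ρ ∘ₗ blockScale u = LinearMap.id := by
  choose β hβ using hu
  refine ⟨LinearMap.pi fun b => ∑ j, β b j • LinearMap.proj ⟨b, j⟩, ?_⟩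
  ext w b
  simp [← mul_assoc, ← sum_mul, hβ]

variable [Fintype B] [DecidableEq B]

def extendByNegSum (b0 : B) : ({b // b ≠ b0} → ℤ) →ₗ[ℤ] (B → ℤ) where
  toFun v b := if h : b = b0 then -∑ c, v c else v ⟨b, h⟩
  map_add' v w := by ext b; by_cases h : b = b0 <;> simp [h, sum_add_distrib, add_comm]
  map_smul' a v := by ext b; by_cases h : b = b0 <;> simp [h, mul_sum]

lemma extendByNegSum_apply_self (b0 : B) (v : {b // b ≠ b0} → ℤ) :
    extendByNegSum b0 v b0 = -∑ c, v c := dif_pos rfl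

lemma extendByNegSum_apply_of_ne {b0 b : B} (h : b ≠ b0) (v : {b // b ≠ b0} → ℤ) :
    extendByNegSum b0 v b = v ⟨b, h⟩ := dif_neg h

lemma range_extendByNegSum (b0 : B) : LinearMap.range (extendByNegSum b0) = sumZero B := by
  ext w
  rw [mem_sumZero, Fintype.sum_eq_add_sum_subtype_ne _ b0]
  constructor
  · rintro ⟨v, rfl⟩
    rw [extendByNegSum_apply_self, neg_add_eq_zero]
    exact (sum_congr rfl fun c _ => extendByNegSum_apply_of_ne c.2 v).symm
  · intro hw
    refine ⟨fun c => w c, funext fun b => ?_⟩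
    by_cases hb : b = b0
    · subst hb
      rw [extendByNegSum_apply_self]
      linarith
    · exact extendByNegSum_apply_of_ne hb _

lemma trinMatrix_transpose_mulVecLin (b0 : B) (m : (b : B) → Fin (ν b) → ℤ) :
    (trinMatrix b0 ν m).transpose.mulVecLin = blockScale m ∘ₗ extendByNegSum b0 := by
  refine LinearMap.ext fun v => funext fun ⟨b, j⟩ => ?_
  simp only [Matrix.mulVecLin_apply, Matrix.mulVec, dotProduct, Matrix.transpose_apply,
    LinearMap.comp_apply, blockScale_apply]
  by_cases hb : b = b0
  · subst hb
    simp [trinMatrix, extendByNegSum_apply_self, mul_sum]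
  · rw [extendByNegSum_apply_of_ne hb, sum_eq_single ⟨b, hb⟩]
    · simp [trinMatrix, hb]
    · intro c _ hc
      have : b ≠ c.1 := fun h => hc (Subtype.ext h.symm)
      simp [trinMatrix, hb, this]
    · simp

end BlockMatrix

section Coweight

variable {G : Type*} [Fintype G] [DecidableEq G]

def coweight (e : G → ℕ) (g : G) : ℕ := ∏ g' ∈ univ.erase g, e g'

lemma mul_coweight (e : G → ℕ) (g : G) : e g * coweight e g = ∏ g', e g' :=
  mul_prod_erase _ _ (mem_univ g)

lemma dvd_coweight (e : G → ℕ) {g g' : G} (h : g ≠ g') : e g ∣ coweight e g' :=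
  dvd_prod_of_mem _ (mem_erase.mpr ⟨h, mem_univ g⟩)

lemma coprime_coweight {e : G → ℕ} (he : Pairwise fun g g' => Nat.Coprime (e g) (e g'))
    (g : G) : Nat.Coprime (e g) (coweight e g) :=
  Nat.Coprime.prod_right fun _ hg' => he (ne_of_mem_erase hg').symm

end Coweight

section ScaledSumZero

variable {B G S : Type*} (grp : B → G) (e : G → ℕ)

def residueMap (s : S → B) : (B → ℤ) →ₗ[ℤ] ((i : S) → ZMod (e (grp (s i)))) :=
  LinearMap.pi fun i => (Int.castAddHom _).toIntLinearMap ∘ₗ LinearMap.proj (s i)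

variable {grp e} in
lemma residueMap_eq_zero_iff {s : S → B} {y : B → ℤ} :
    residueMap grp e s y = 0 ↔ ∀ i, (e (grp (s i)) : ℤ) ∣ y (s i) := by
  simp [residueMap, funext_iff, ZMod.intCast_zmod_eq_zero_iff_dvd]

variable [Fintype B]

def scaledSumZero : Submodule ℤ (B → ℤ) :=
  (sumZero B).map (LinearMap.mulLeft ℤ fun b => (e (grp b) : ℤ))

lemma scaledSumZero_le_ker_residueMap (s : S → B) :
    scaledSumZero grp e ≤ LinearMap.ker (residueMap grp e s) := by
  rintro _ ⟨w, -, rfl⟩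
  exact residueMap_eq_zero_iff.mpr fun i => dvd_mul_right _ _

def torsionResidueMap (s : S → B) :
    torsion ℤ ((B → ℤ) ⧸ scaledSumZero grp e) →ₗ[ℤ] ((i : S) → ZMod (e (grp (s i)))) :=
  (scaledSumZero grp e).liftQ _ (scaledSumZero_le_ker_residueMap grp e s) ∘ₗ
    (torsion ℤ _).subtype

variable [Fintype G] [DecidableEq G]

def weightedSum (y : B → ℤ) : ℤ := ∑ b, (coweight e (grp b) : ℤ) * y b

variable {grp e}

lemma weightedSum_mul (y : B → ℤ) :
    weightedSum grp e (fun b => e (grp b) * y b) = (∏ g, e g : ℕ) * ∑ b, y b := by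
  simp only [weightedSum, mul_sum, ← mul_assoc, ← Nat.cast_mul, mul_comm (coweight e _),
    mul_coweight]

lemma weightedSum_smul (a : ℤ) (y : B → ℤ) :
    weightedSum grp e (a • y) = a * weightedSum grp e y := by
  simp only [weightedSum, Pi.smul_apply, smul_eq_mul, mul_sum, mul_left_comm]

lemma mem_scaledSumZero_iff (he : ∀ g, e g ≠ 0) {y : B → ℤ} :
    y ∈ scaledSumZero grp e ↔ (∀ b, (e (grp b) : ℤ) ∣ y b) ∧ weightedSum grp e y = 0 := by
  constructor
  · rintro ⟨w, hw, rfl⟩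
    rw [SetLike.mem_coe, mem_sumZero] at hw
    refine ⟨fun b => dvd_mul_right _ _, ?_⟩
    change weightedSum grp e (fun b => _ * w b) = 0
    rw [weightedSum_mul, hw, mul_zero]
  · rintro ⟨hdvd, hsum⟩
    choose w hw using hdvd
    have hy : y = fun b => (e (grp b) : ℤ) * w b := funext hw
    refine ⟨w, mem_sumZero.mpr ?_, hy.symm⟩
    rw [hy, weightedSum_mul] at hsum
    exact (mul_eq_zero.mp hsum).resolve_left
      (by exact_mod_cast prod_ne_zero_iff.mpr fun g _ => he g)

lemma mk_mem_torsion_iff (he : ∀ g, e g ≠ 0) (y : B → ℤ) :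
    Submodule.Quotient.mk (p := scaledSumZero grp e) y ∈ torsion ℤ _ ↔
      weightedSum grp e y = 0 := by
  rw [mem_torsion_iff]
  constructor
  · rintro ⟨⟨a, ha⟩, hay⟩
    rw [Submonoid.mk_smul, ← Quotient.mk_smul, Quotient.mk_eq_zero, mem_scaledSumZero_iff he,
      weightedSum_smul] at hay
    exact (mul_eq_zero.mp hay.2).resolve_left (nonZeroDivisors.ne_zero ha)
  · intro hsum
    have hprod : ((∏ g, e g : ℕ) : ℤ) ≠ 0 := by
      exact_mod_cast prod_ne_zero_iff.mpr fun g _ => he g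
    refine ⟨⟨_, mem_nonZeroDivisors_of_ne_zero hprod⟩, ?_⟩
    rw [Submonoid.mk_smul, ← Quotient.mk_smul, Quotient.mk_eq_zero, mem_scaledSumZero_iff he,
      weightedSum_smul, hsum, mul_zero]
    exact ⟨fun b => (Int.natCast_dvd_natCast.mpr (dvd_prod_of_mem e (mem_univ _))).mul_right _,
      rfl⟩

lemma dvd_of_weightedSum_eq_zero (hcop : Pairwise fun g g' => Nat.Coprime (e g) (e g'))
    {rep : G → B} {y : B → ℤ} (hsum : weightedSum grp e y = 0)
    (hdvd : ∀ b, b ≠ rep (grp b) → (e (grp b) : ℤ) ∣ y b) (b : B) :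
    (e (grp b) : ℤ) ∣ y b := by
  classical
  by_cases hb : b = rep (grp b)
  swap
  · exact hdvd b hb
  have hrest : (e (grp b) : ℤ) ∣ ∑ b' ∈ univ.erase b, (coweight e (grp b') : ℤ) * y b' := by
    refine dvd_sum fun b' hb' => ?_
    by_cases hg : grp b' = grp b
    · refine Dvd.dvd.mul_left ?_ _
      rw [← hg]
      exact hdvd b' (by rw [hg, ← hb]; exact ne_of_mem_erase hb')
    · exact (Int.natCast_dvd_natCast.mpr (dvd_coweight e (Ne.symm hg))).mul_right _
  have hterm : (e (grp b) : ℤ) ∣ (coweight e (grp b) : ℤ) * y b := by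
    rw [weightedSum, ← add_sum_erase _ _ (mem_univ b)] at hsum
    rw [← dvd_add_left hrest, hsum]
    exact dvd_zero _
  exact (Nat.isCoprime_iff_coprime.mpr (coprime_coweight hcop _)).dvd_of_dvd_mul_left hterm

variable [Fintype S]

lemma exists_extension_weightedSum_eq_zero {s : S → B} {rep : G → B}
    (hbij : Function.Bijective (Sum.elim s rep)) (hrep : ∀ g, grp (rep g) = g) (z : S → ℤ) :
    ∃ y : B → ℤ, (∀ i, y (s i) = z i) ∧ weightedSum grp e y = 0 := by
  classical
  let φ := Equiv.ofBijective _ hbij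
  let y₀ : S ⊕ G → ℤ := Sum.elim z fun g => -∑ i with grp (s i) = g, z i
  have hs : ∀ i, φ.symm (s i) = Sum.inl i := fun i => φ.symm_apply_eq.mpr rfl
  have hr : ∀ g, φ.symm (rep g) = Sum.inr g := fun g => φ.symm_apply_eq.mpr rfl
  refine ⟨y₀ ∘ φ.symm, fun i => by simp [y₀, hs], ?_⟩
  have hfiber : ∀ g, (coweight e g : ℤ) * ∑ i with grp (s i) = g, z i
      = ∑ i with grp (s i) = g, (coweight e (grp (s i)) : ℤ) * z i := fun g => by
    rw [mul_sum]
    exact sum_congr rfl fun i hi => by rw [(mem_filter.mp hi).2]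
  rw [weightedSum, ← φ.sum_comp]
  simp only [Function.comp_apply, Fintype.sum_sum_type, y₀, φ, Equiv.ofBijective_apply,
    Sum.elim_inl, Sum.elim_inr, hs, hr, hrep, mul_neg, sum_neg_distrib, hfiber, sum_fiberwise,
    add_neg_cancel]

lemma torsionResidueMap_bijective (he : ∀ g, e g ≠ 0)
    (hcop : Pairwise fun g g' => Nat.Coprime (e g) (e g')) {s : S → B} {rep : G → B}
    (hbij : Function.Bijective (Sum.elim s rep)) (hrep : ∀ g, grp (rep g) = g) :
    Function.Bijective (torsionResidueMap grp e s) := by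
  constructor
  · rw [injective_iff_map_eq_zero]
    rintro ⟨x, hx⟩ hres
    obtain ⟨y, rfl⟩ := Submodule.Quotient.mk_surjective _ x
    have hsum := (mk_mem_torsion_iff he y).mp hx
    have hdvd : ∀ b, b ≠ rep (grp b) → (e (grp b) : ℤ) ∣ y b := fun b hb => by
      obtain ⟨i | g, rfl⟩ := hbij.2 b
      · exact residueMap_eq_zero_iff.mp hres i
      · exact absurd (by simp [hrep]) hb
    exact Subtype.ext ((Submodule.Quotient.mk_eq_zero _).mpr ((mem_scaledSumZero_iff he).mpr
      ⟨dvd_of_weightedSum_eq_zero hcop hsum hdvd, hsum⟩))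
  · intro a
    choose z hz using fun i => ZMod.intCast_surjective (a i)
    obtain ⟨y, hys, hsum⟩ := exists_extension_weightedSum_eq_zero (e := e) hbij hrep z
    refine ⟨⟨_, (mk_mem_torsion_iff he y).mpr hsum⟩, funext fun i => ?_⟩
    simp [torsionResidueMap, residueMap, hys, hz]

noncomputable def torsionScaledSumZeroEquiv (he : ∀ g, e g ≠ 0)
    (hcop : Pairwise fun g g' => Nat.Coprime (e g) (e g')) {s : S → B} {rep : G → B}
    (hbij : Function.Bijective (Sum.elim s rep)) (hrep : ∀ g, grp (rep g) = g) :
    torsion ℤ ((B → ℤ) ⧸ scaledSumZero grp e) ≃ₗ[ℤ] ((i : S) → ZMod (e (grp (s i)))) :=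
  LinearEquiv.ofBijective _ (torsionResidueMap_bijective he hcop hbij hrep)

end ScaledSumZero

section BlockData

variable (r : ℕ)

def blockGroup : (Fin 3 × Fin 2) ⊕ (Fin (r - 2) × Fin 4) → Fin 3 ⊕ Fin (r - 2) :=
  Sum.map Prod.fst Prod.fst

def groupIndex : Fin 3 ⊕ Fin (r - 2) → ℕ := Sum.elim (fun i => i.1) (fun k => k.1 + 3)

def groupContent (L : ℕ → ℕ) : Fin 3 ⊕ Fin (r - 2) → ℕ :=
  Sum.elim (fun i => L i / 2) (fun k => L (k.1 + 3))

def freeBlock : Fin 3 ⊕ (Fin (r - 2) × Fin 3) → (Fin 3 × Fin 2) ⊕ (Fin (r - 2) × Fin 4) :=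
  Sum.map (fun i => (i, 1)) (fun p => (p.1, p.2.castSucc))

def repBlock : Fin 3 ⊕ Fin (r - 2) → (Fin 3 × Fin 2) ⊕ (Fin (r - 2) × Fin 4) :=
  Sum.map (fun i => (i, 0)) (fun k => (k, Fin.last 3))

def primitiveVec (n : ℕ → ℕ) (l : ℕ → ℕ → ℕ) (L : ℕ → ℕ)
    (b : (Fin 3 × Fin 2) ⊕ (Fin (r - 2) × Fin 4)) (j : Fin (blockLen10 r n b)) : ℤ :=
  ((l (groupIndex r (blockGroup r b)) j / L (groupIndex r (blockGroup r b)) : ℕ) : ℤ)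

lemma blockGroup_repBlock (g : Fin 3 ⊕ Fin (r - 2)) : blockGroup r (repBlock r g) = g := by
  rcases g with i | k <;> rfl

lemma bijective_freeBlock_repBlock :
    Function.Bijective (Sum.elim (freeBlock r) (repBlock r)) := by
  rw [Fintype.bijective_iff_injective_and_card]
  refine ⟨?_, by simp; omega⟩
  rintro ((i | ⟨k, c⟩) | (i | k)) ((i' | ⟨k', c'⟩) | (i' | k')) h <;>
    simp_all [freeBlock, repBlock, Fin.ext_iff, Fin.castSucc]
  all_goals omega

variable {r} {L : ℕ → ℕ}

def quotientTargetEquiv :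
    ((i : Fin 3 ⊕ (Fin (r - 2) × Fin 3)) → ZMod (groupContent r L (blockGroup r (freeBlock r i))))
      ≃+ (ZMod (L 0 / 2) × ZMod (L 1 / 2) × ZMod (L 2 / 2) ×
        ((i : Fin (r - 2)) → Fin 3 → ZMod (L (i.1 + 3)))) where
  toFun f := (f (.inl 0), f (.inl 1), f (.inl 2), fun k c => f (.inr (k, c)))
  invFun p
    | .inl ⟨0, _⟩ => p.1
    | .inl ⟨1, _⟩ => p.2.1
    | .inl ⟨2, _⟩ => p.2.2.1
    | .inr (k, c) => p.2.2.2 k c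
  left_inv f := by
    funext i
    rcases i with i | _
    · fin_cases i <;> rfl
    · rfl
  right_inv _ := rfl
  map_add' _ _ := rfl

variable {n : ℕ → ℕ} {l : ℕ → ℕ → ℕ}

lemma groupIndex_le (hr : 2 ≤ r) (g : Fin 3 ⊕ Fin (r - 2)) : groupIndex r g ≤ r := by
  rcases g with i | k
  · simp only [groupIndex, Sum.elim_inl]; omega
  · simp only [groupIndex, Sum.elim_inr]; omega

lemma blockVec10_eq_mul (hdvd : ∀ i, ∀ j < n i, L i ∣ l i j) (heven : ∀ i : Fin 3, 2 ∣ L i) :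
    blockVec10 r n l =
      fun b j => (groupContent r L (blockGroup r b) : ℤ) * primitiveVec r n l L b j := by
  funext b j
  rcases b with ⟨i, c⟩ | ⟨k, c⟩
  · obtain ⟨a, ha⟩ := heven i
    obtain ⟨q, hq⟩ := hdvd i j j.isLt
    show ((l i j / 2 : ℕ) : ℤ) = ((L i / 2 : ℕ) : ℤ) * ((l i j / L i : ℕ) : ℤ)
    rw [hq, ha]
    rcases Nat.eq_zero_or_pos a with rfl | ha0
    · simp
    rw [Nat.mul_div_cancel_left q (by omega), mul_assoc, Nat.mul_div_cancel_left _ two_pos,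
      Nat.mul_div_cancel_left _ two_pos, Nat.cast_mul]
  · show ((l (k + 3) j : ℕ) : ℤ) = (L (k + 3) : ℤ) * ((l (k + 3) j / L (k + 3) : ℕ) : ℤ)
    exact_mod_cast (Nat.mul_div_cancel' (hdvd _ j j.isLt)).symm

lemma exists_sum_mul_primitiveVec_eq_one (hr : 2 ≤ r) (hn : ∀ i ≤ r, 0 < n i)
    (hl : ∀ i ≤ r, ∀ j < n i, 0 < l i j) (hL : ∀ i, L i = (range (n i)).gcd (l i))
    (b : (Fin 3 × Fin 2) ⊕ (Fin (r - 2) × Fin 4)) :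
    ∃ β : Fin (blockLen10 r n b) → ℤ, ∑ j, β j * primitiveVec r n l L b j = 1 := by
  have key : ∀ i ≤ r, ∃ β : Fin (n i) → ℤ, ∑ j : Fin (n i), β j * ((l i j / L i : ℕ) : ℤ) = 1 :=
    fun i hi => hL i ▸ exists_sum_mul_div_gcd_eq_one (hn i hi) (hl i hi 0 (hn i hi)).ne'
  rcases b with ⟨i, c⟩ | ⟨k, c⟩
  · exact key i (groupIndex_le hr (.inl i))
  · exact key (k + 3) (groupIndex_le hr (.inr k))

lemma groupContent_ne_zero (hr : 2 ≤ r) (hLpos : ∀ i ≤ r, 0 < L i)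
    (heven : ∀ i : Fin 3, 2 ∣ L i) (g : Fin 3 ⊕ Fin (r - 2)) : groupContent r L g ≠ 0 := by
  have hpos := hLpos _ (groupIndex_le hr g)
  rcases g with i | k
  · have := Nat.le_of_dvd hpos (heven i)
    simp only [groupContent, groupIndex, Sum.elim_inl] at this ⊢
    omega
  · exact hpos.ne'

lemma groupContent_pairwise_coprime (hpair : ∀ i j : Fin 3, i ≠ j → Nat.gcd (L i) (L j) = 2)
    (heven : ∀ i : Fin 3, 2 ∣ L i)
    (hcop : ∀ i j, i ≤ r → j ≤ r → i ≠ j → 3 ≤ j → Nat.gcd (L i) (L j) = 1) :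
    Pairwise fun g g' => Nat.Coprime (groupContent r L g) (groupContent r L g') := by
  have hmixed (i : Fin 3) (k : Fin (r - 2)) : Nat.Coprime (L i / 2) (L (k + 3)) := by
    have := i.isLt
    have := k.isLt
    exact Nat.Coprime.coprime_dvd_left (Nat.div_dvd_of_dvd (heven i))
      (hcop i (k + 3) (by omega) (by omega) (by omega) (by omega))
  rintro (i | k) (i' | k') h
  · have h2 := hpair i i' fun hii => h (congrArg _ hii)
    simpa [groupContent, h2] using Nat.coprime_div_gcd_div_gcd (m := L i) (n := L i') (by omega)
  · exact hmixed i k'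
  · exact (hmixed i' k).symm
  · have hkk : k.1 ≠ k'.1 := fun hkk => h (congrArg _ (Fin.ext hkk))
    exact hcop (k + 3) (k' + 3) (by omega) (by omega) (by omega) (by omega)

end BlockData

/-- Lemma 3.2(ii): with `gcd(𝔩₀,𝔩₁) = gcd(𝔩₁,𝔩₂) = gcd(𝔩₀,𝔩₂) = 2` and
`gcd(𝔩ᵢ,𝔩ⱼ) = 1` whenever `j ∉ {0,1,2}`, the torsion subgroup of `ℤ^{n'}/im((P₀')ᵀ)`
is isomorphic to `ℤ/(𝔩₀/2)ℤ × ℤ/(𝔩₁/2)ℤ × ℤ/(𝔩₂/2)ℤ × (ℤ/𝔩₃ℤ)³ × ... × (ℤ/𝔩ᵣℤ)³`. -/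
theorem stmt_10 (r : ℕ) (hr : 2 ≤ r) (n : ℕ → ℕ) (l : ℕ → ℕ → ℕ)
    (hn : ∀ i ≤ r, 0 < n i) (hl : ∀ i ≤ r, ∀ j < n i, 0 < l i j)
    (L : ℕ → ℕ) (hL : ∀ i, L i = (Finset.range (n i)).gcd (l i))
    (h01 : Nat.gcd (L 0) (L 1) = 2) (h12 : Nat.gcd (L 1) (L 2) = 2)
    (h02 : Nat.gcd (L 0) (L 2) = 2)
    (hcop : ∀ i j, i ≤ r → j ≤ r → i ≠ j → 3 ≤ j → Nat.gcd (L i) (L j) = 1) :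
    Nonempty ((Submodule.torsion ℤ
        ((((b : (Fin 3 × Fin 2) ⊕ (Fin (r - 2) × Fin 4)) × Fin (blockLen10 r n b)) → ℤ) ⧸
          LinearMap.range
            ((trinMatrix (Sum.inl (0, 0)) (blockLen10 r n)
              (blockVec10 r n l)).transpose.mulVecLin))) ≃+
      (ZMod (L 0 / 2) × ZMod (L 1 / 2) × ZMod (L 2 / 2) ×
        ((i : Fin (r - 2)) → Fin 3 → ZMod (L (i.1 + 3))))) := by
  have hpair : ∀ i j : Fin 3, i ≠ j → Nat.gcd (L i) (L j) = 2 := by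
    intro i j hij
    fin_cases i <;> fin_cases j <;> simp_all [Nat.gcd_comm]
  have heven : ∀ i : Fin 3, 2 ∣ L i := fun i =>
    hpair i (i + 1) (by fin_cases i <;> decide) ▸ Nat.gcd_dvd_left _ _
  have hLpos : ∀ i ≤ r, 0 < L i := fun i hi => Nat.pos_of_ne_zero fun h =>
    (hl i hi 0 (hn i hi)).ne' (gcd_eq_zero_iff.mp (hL i ▸ h) 0 (mem_range.mpr (hn i hi)))
  have hdvd : ∀ i, ∀ j < n i, L i ∣ l i j := fun i j hj => hL i ▸ gcd_dvd (mem_range.mpr hj)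
  obtain ⟨ρ, hρ⟩ := exists_leftInverse_blockScale (exists_sum_mul_primitiveVec_eq_one hr hn hl hL)
  rw [trinMatrix_transpose_mulVecLin, blockVec10_eq_mul hdvd heven, blockScale_mul,
    LinearMap.comp_assoc, LinearMap.range_comp, LinearMap.range_comp, range_extendByNegSum]
  exact ⟨((torsionQuotMapEquiv hρ _).trans (torsionScaledSumZeroEquiv
    (groupContent_ne_zero hr hLpos heven) (groupContent_pairwise_coprime hpair heven hcop)
    (bijective_freeBlock_repBlock r) (blockGroup_repBlock r))).toAddEquiv.trans
    quotientTargetEquiv⟩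
end
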